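/- Let S be a bipotent semiring, a ∈ S, and let ⟨a⟩ be the subsemiring of S generated by a (which equals the set of positive powers of a). Then: (i) if a has infinite multiplicative order and a < a², then ⟨a⟩ is isomorphic as a semiring to ℕ_max; (ii) if a has infinite multiplicative order and a² < a, then ⟨a⟩ is isomorphic to (-ℕ)_max; (iii) if a has multiplicative order k ∈ ℕ and a ≤ a², then ⟨a⟩ is isomorphic to [k]_max; (iv) if a has multiplicative order k ∈ ℕ and a² ≤ a, then ⟨a⟩ is isomorphic to [-k]_max. -/

import Mathlib

set_option maxHeartbeats 1000000

universe u

/-! ### Semiring classes.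

A *semiring* here is a nonempty set with an associative commutative addition and an
associative multiplication which distributes over addition on both sides; no zero or
identity element is assumed. -/

class PlainSemiring (S : Type u) extends Add S, Mul S where
  nonempty' : Nonempty S
  add_assoc' : ∀ a b c : S, a + b + c = a + (b + c)
  add_comm' : ∀ a b : S, a + b = b + a
  mul_assoc' : ∀ a b c : S, a * b * c = a * (b * c)
  left_distrib' : ∀ a b c : S, a * (b + c) = a * b + a * c
  right_distrib' : ∀ a b c : S, (a + b) * c = a * c + b * c

/-- A bipotent semiring: `x + y` is always either `x` or `y`.
(The induced total order is given by `x ≤ y ↔ x + y = y`.) -/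
class BipotentSemiring (S : Type u) extends PlainSemiring S where
  bipotent : ∀ a b : S, a + b = a ∨ a + b = b

/-- A commutative bipotent semiring. -/
class CommBipotentSemiring (S : Type u) extends BipotentSemiring S where
  mul_comm' : ∀ a b : S, a * b = b * a

/-- `mpow a n` is the `(n+1)`-st power of `a`, so the set of positive powers of `a`
is exactly `Set.range (mpow a)`, and the multiplicative order of `a` is the
cardinality of `Set.range (mpow a)`. -/
def mpow {S : Type*} [Mul S] (a : S) : ℕ → S
  | 0 => a
  | n + 1 => mpow a n * a

lemma mpow_mul_mpow {S : Type*} [PlainSemiring S] (a : S) (m n : ℕ) :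
    mpow a m * mpow a n = mpow a (m + n + 1) := by
  induction n with
  | zero => rfl
  | succ n ih =>
    show mpow a m * (mpow a n * a) = mpow a (m + n + 1) * a
    rw [← PlainSemiring.mul_assoc', ih]

/-! ### Products of finite families, and permutability. -/

/-- Fold step used to define sums/products of possibly empty families in a structure
with no neutral element; the overall fold is `none` iff the family is empty. -/
def optStep {S : Type*} (op : S → S → S) : Option S → S → Option S :=
  fun acc x => some (acc.elim x (fun a => op a x))

/-- The sum `s 0 + s 1 + ⋯` of a finite family, as an `Option` (`none` iff `k = 0`). -/
def finSum {S : Type*} [Add S] {k : ℕ} (s : Fin k → S) : Option S :=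
  (List.ofFn s).foldl (optStep (· + ·)) none

/-- The product `s 0 * s 1 * ⋯` of a finite family, as an `Option` (`none` iff `k = 0`). -/
def finProd {S : Type*} [Mul S] {k : ℕ} (s : Fin k → S) : Option S :=
  (List.ofFn s).foldl (optStep (· * ·)) none

/-- A multiplicative structure is `k`-permutable if every product of `k` elements is
preserved by some non-identity permutation of its factors. -/
def KPermutable (S : Type*) [Mul S] (k : ℕ) : Prop :=
  ∀ s : Fin k → S, ∃ σ : Equiv.Perm (Fin k), σ ≠ Equiv.refl (Fin k) ∧
    finProd (fun i => s (σ i)) = finProd s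

/-- A semigroup is strongly permutable if it is `k`-permutable for some `k ≥ 2`. -/
def StronglyPermutable (S : Type*) [Mul S] : Prop :=
  ∃ k : ℕ, 2 ≤ k ∧ KPermutable S k

/-- A semigroup is weakly permutable if for some `k ≥ 2`, any product of `k` elements
is computed identically by two distinct permutations of its factors. -/
def WeaklyPermutable (S : Type*) [Mul S] : Prop :=
  ∃ k : ℕ, 2 ≤ k ∧ ∀ s : Fin k → S, ∃ σ τ : Equiv.Perm (Fin k), σ ≠ τ ∧
    finProd (fun i => s (σ i)) = finProd (fun i => s (τ i))

/-- Isomorphism of semirings (bijection preserving addition and multiplication). -/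
def RingLikeIso (S T : Type*) [Add S] [Mul S] [Add T] [Mul T] : Prop :=
  ∃ f : S → T, Function.Bijective f ∧ (∀ a b : S, f (a + b) = f a + f b) ∧
    (∀ a b : S, f (a * b) = f a * f b)

/-! ### Matrices. -/

/-- Square `n × n` matrices over `S`. -/
def MatSR (S : Type u) (n : ℕ) : Type u := Fin n → Fin n → S

/-- Matrix multiplication, `(A*B) i j = Σ_k (A i k * B k j)`.  (For `n ≥ 1` — the only
case of interest — the `getD` default value is never used.) -/
def matMul {S : Type*} [Add S] [Mul S] {n : ℕ} (A B : MatSR S n) : MatSR S n :=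
  fun i j => (finSum (fun k : Fin n => A i k * B k j)).getD (A i j * B i j)

/-- The multiplicative semigroup `M_n(S)`. -/
instance {S : Type*} [Add S] [Mul S] {n : ℕ} : Mul (MatSR S n) := ⟨matMul⟩

/-! ### `S⁰`: adjoining a zero, and upper triangular matrices. -/

/-- `S` with a zero (additively neutral, multiplicatively absorbing) element adjoined. -/
inductive Adj0 (S : Type u) : Type u
  | zero : Adj0 S
  | elem : S → Adj0 S

namespace Adj0

def add' {S : Type*} [Add S] : Adj0 S → Adj0 S → Adj0 S
  | .zero, b => b
  | .elem a, .zero => .elem a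
  | .elem a, .elem b => .elem (a + b)

def mul' {S : Type*} [Mul S] : Adj0 S → Adj0 S → Adj0 S
  | .zero, _ => .zero
  | .elem _, .zero => .zero
  | .elem a, .elem b => .elem (a * b)

instance {S : Type*} [Add S] : Add (Adj0 S) := ⟨add'⟩
instance {S : Type*} [Mul S] : Mul (Adj0 S) := ⟨mul'⟩

@[simp] lemma zero_add {S : Type*} [Add S] (b : Adj0 S) : (zero : Adj0 S) + b = b := rfl
@[simp] lemma add_zero {S : Type*} [Add S] (a : Adj0 S) : a + (zero : Adj0 S) = a := by
  cases a <;> rfl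
@[simp] lemma elem_add_elem {S : Type*} [Add S] (a b : S) :
    (elem a : Adj0 S) + elem b = elem (a + b) := rfl
@[simp] lemma zero_mul {S : Type*} [Mul S] (b : Adj0 S) : (zero : Adj0 S) * b = zero := rfl
@[simp] lemma mul_zero {S : Type*} [Mul S] (a : Adj0 S) : a * (zero : Adj0 S) = zero := by
  cases a <;> rfl
@[simp] lemma elem_mul_elem {S : Type*} [Mul S] (a b : S) :
    (elem a : Adj0 S) * elem b = elem (a * b) := rfl

lemma add_eq_zero_iff {S : Type*} [Add S] (a b : Adj0 S) :
    a + b = zero ↔ a = zero ∧ b = zero := by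
  cases a <;> cases b <;> simp

end Adj0

lemma foldl_optStep_adj0 {S : Type*} [Add S] (l : List (Adj0 S)) (a : Adj0 S) :
    ∃ c : Adj0 S, l.foldl (optStep (· + ·)) (some a) = some c ∧
      (c = Adj0.zero ↔ a = Adj0.zero ∧ ∀ x ∈ l, x = Adj0.zero) := by
  induction l generalizing a with
  | nil => exact ⟨a, rfl, by simp⟩
  | cons x l ih =>
    obtain ⟨c, hc, hiff⟩ := ih (a + x)
    refine ⟨c, ?_, ?_⟩
    · simpa [optStep] using hc
    · rw [hiff, Adj0.add_eq_zero_iff]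
      simp only [List.mem_cons, forall_eq_or_imp]
      tauto

lemma finSum_adj0_eq_zero {S : Type*} [Add S] {n : ℕ} (f : Fin n → Adj0 S) (i : Fin n)
    (d : Adj0 S) (h : ∀ k, f k = Adj0.zero) : (finSum f).getD d = Adj0.zero := by
  cases n with
  | zero => exact i.elim0
  | succ m =>
    rw [finSum, List.ofFn_succ, List.foldl_cons]
    obtain ⟨c, hc, hiff⟩ := foldl_optStep_adj0 (List.ofFn fun i : Fin m => f i.succ) (f 0)
    rw [show optStep (· + ·) none (f 0) = some (f 0) from rfl, hc]
    have : c = Adj0.zero := hiff.mpr ⟨h 0, by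
      intro x hx
      rw [List.mem_ofFn] at hx
      obtain ⟨j, rfl⟩ := hx
      exact h _⟩
    simp [this]

lemma finSum_adj0_ne_zero {S : Type*} [Add S] {n : ℕ} (f : Fin n → Adj0 S) (i : Fin n)
    (d : Adj0 S) (h : f i ≠ Adj0.zero) : (finSum f).getD d ≠ Adj0.zero := by
  cases n with
  | zero => exact i.elim0
  | succ m =>
    rw [finSum, List.ofFn_succ, List.foldl_cons]
    obtain ⟨c, hc, hiff⟩ := foldl_optStep_adj0 (List.ofFn fun i : Fin m => f i.succ) (f 0)
    rw [show optStep (· + ·) none (f 0) = some (f 0) from rfl, hc]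
    simp only [Option.getD_some]
    intro hcz
    obtain ⟨h0, hall⟩ := hiff.mp hcz
    induction i using Fin.cases with
    | zero => exact h h0
    | succ j => exact h (hall _ (List.mem_ofFn.mpr ⟨j, rfl⟩))

/-- Upper-triangularity over `S⁰`: entries strictly below the diagonal are the
adjoined zero; entries on and above the diagonal lie in `S`. -/
def IsUT {S : Type*} {n : ℕ} (A : MatSR (Adj0 S) n) : Prop :=
  (∀ i j : Fin n, (j : ℕ) < (i : ℕ) → A i j = Adj0.zero) ∧
  (∀ i j : Fin n, (i : ℕ) ≤ (j : ℕ) → ∃ s : S, A i j = Adj0.elem s)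

lemma IsUT.mul {S : Type*} [Add S] [Mul S] {n : ℕ} {A B : MatSR (Adj0 S) n}
    (hA : IsUT A) (hB : IsUT B) : IsUT (matMul A B) := by
  constructor
  · intro i j hji
    apply finSum_adj0_eq_zero _ i
    intro k
    rcases le_or_gt (i : ℕ) (k : ℕ) with h | h
    · rw [hB.1 k j (lt_of_lt_of_le hji h), Adj0.mul_zero]
    · rw [hA.1 i k h, Adj0.zero_mul]
  · intro i j hij
    have hne : matMul A B i j ≠ Adj0.zero := by
      apply finSum_adj0_ne_zero _ i
      obtain ⟨s, hs⟩ := hA.2 i i le_rfl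
      obtain ⟨t, ht⟩ := hB.2 i j hij
      rw [hs, ht, Adj0.elem_mul_elem]
      simp
    cases hc : matMul A B i j with
    | zero => exact absurd hc hne
    | elem s => exact ⟨s, rfl⟩

/-- The multiplicative semigroup `UT_n(S)` of upper triangular matrices over `S⁰`. -/
def UTMat (S : Type u) (n : ℕ) : Type u := {A : MatSR (Adj0 S) n // IsUT A}

instance {S : Type*} [Add S] [Mul S] {n : ℕ} : Mul (UTMat S n) :=
  ⟨fun A B => ⟨matMul A.1 B.1, A.2.mul B.2⟩⟩

/-! ### `S^{01}`: adjoining a zero and an identity, and unitriangular matrices. -/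

/-- `S` with a zero and a multiplicative identity adjoined (`S^{01}` in the paper).
The sum of `one` and an `elem` is left undefined in the paper; it is given an
arbitrary value here, and never arises in products of unitriangular matrices. -/
inductive Adj01 (S : Type u) : Type u
  | zero : Adj01 S
  | one : Adj01 S
  | elem : S → Adj01 S

namespace Adj01

def add' {S : Type*} [Add S] : Adj01 S → Adj01 S → Adj01 S
  | .zero, b => b
  | a, .zero => a
  | .one, .one => .one
  | .one, .elem b => .elem b
  | .elem a, .one => .elem a
  | .elem a, .elem b => .elem (a + b)

def mul' {S : Type*} [Mul S] : Adj01 S → Adj01 S → Adj01 S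
  | .zero, _ => .zero
  | _, .zero => .zero
  | .one, b => b
  | a, .one => a
  | .elem a, .elem b => .elem (a * b)

instance {S : Type*} [Add S] : Add (Adj01 S) := ⟨add'⟩
instance {S : Type*} [Mul S] : Mul (Adj01 S) := ⟨mul'⟩

@[simp] lemma zero_add {S : Type*} [Add S] (b : Adj01 S) : (zero : Adj01 S) + b = b := by
  cases b <;> rfl
@[simp] lemma add_zero {S : Type*} [Add S] (a : Adj01 S) : a + (zero : Adj01 S) = a := by
  cases a <;> rfl
@[simp] lemma one_add_one {S : Type*} [Add S] : (one : Adj01 S) + one = one := rfl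
@[simp] lemma elem_add_elem {S : Type*} [Add S] (a b : S) :
    (elem a : Adj01 S) + elem b = elem (a + b) := rfl
@[simp] lemma one_add_elem {S : Type*} [Add S] (b : S) :
    (one : Adj01 S) + elem b = elem b := rfl
@[simp] lemma elem_add_one {S : Type*} [Add S] (a : S) :
    (elem a : Adj01 S) + one = elem a := rfl
@[simp] lemma zero_mul {S : Type*} [Mul S] (b : Adj01 S) : (zero : Adj01 S) * b = zero := by
  cases b <;> rfl
@[simp] lemma mul_zero {S : Type*} [Mul S] (a : Adj01 S) : a * (zero : Adj01 S) = zero := by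
  cases a <;> rfl
@[simp] lemma one_mul {S : Type*} [Mul S] (b : Adj01 S) : (one : Adj01 S) * b = b := by
  cases b <;> rfl
@[simp] lemma mul_one {S : Type*} [Mul S] (a : Adj01 S) : a * (one : Adj01 S) = a := by
  cases a <;> rfl
@[simp] lemma elem_mul_elem {S : Type*} [Mul S] (a b : S) :
    (elem a : Adj01 S) * elem b = elem (a * b) := rfl

lemma mul_ne_one {S : Type*} [Mul S] {a b : Adj01 S} (ha : a ≠ one) (hb : b ≠ one) :
    a * b ≠ one := by
  cases a <;> cases b <;> simp_all

lemma add_ne_one {S : Type*} [Add S] {a b : Adj01 S} (ha : a ≠ one) (hb : b ≠ one) :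
    a + b ≠ one := by
  cases a <;> cases b <;> simp_all

lemma add_01 {S : Type*} [Add S] {a b : Adj01 S} (ha : a = zero ∨ a = one)
    (hb : b = zero ∨ b = one) :
    (a + b = zero ∨ a + b = one) ∧ (a + b = one ↔ a = one ∨ b = one) := by
  rcases ha with rfl | rfl <;> rcases hb with rfl | rfl <;> simp

end Adj01

lemma foldl_optStep_adj01 {S : Type*} [Add S] (l : List (Adj01 S)) (a : Adj01 S)
    (ha : a = Adj01.zero ∨ a = Adj01.one) (hl : ∀ x ∈ l, x = Adj01.zero ∨ x = Adj01.one) :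
    ∃ c : Adj01 S, l.foldl (optStep (· + ·)) (some a) = some c ∧
      (c = Adj01.zero ∨ c = Adj01.one) ∧
      (c = Adj01.one ↔ a = Adj01.one ∨ ∃ x ∈ l, x = Adj01.one) := by
  induction l generalizing a with
  | nil => exact ⟨a, rfl, ha, by simp⟩
  | cons x l ih =>
    have hx := hl x (by simp)
    have key := Adj01.add_01 ha hx
    obtain ⟨c, hc, hc01, hiff⟩ := ih (a + x) key.1 (fun y hy => hl y (by simp [hy]))
    refine ⟨c, by simpa [optStep] using hc, hc01, ?_⟩
    rw [hiff, key.2]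
    simp only [List.mem_cons, exists_eq_or_imp]
    tauto

lemma foldl_optStep_adj01_ne_one {S : Type*} [Add S] (l : List (Adj01 S)) (a : Adj01 S)
    (ha : a ≠ Adj01.one) (hl : ∀ x ∈ l, x ≠ Adj01.one) :
    ∃ c : Adj01 S, l.foldl (optStep (· + ·)) (some a) = some c ∧ c ≠ Adj01.one := by
  induction l generalizing a with
  | nil => exact ⟨a, rfl, ha⟩
  | cons x l ih =>
    have hax : a + x ≠ Adj01.one := Adj01.add_ne_one ha (hl x (by simp))
    obtain ⟨c, hc, hcne⟩ := ih (a + x) hax (fun y hy => hl y (by simp [hy]))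
    exact ⟨c, by simpa [optStep] using hc, hcne⟩

lemma finSum_adj01_eq_one {S : Type*} [Add S] {n : ℕ} (f : Fin n → Adj01 S) (i : Fin n)
    (d : Adj01 S) (h01 : ∀ k, f k = Adj01.zero ∨ f k = Adj01.one) (hi : f i = Adj01.one) :
    (finSum f).getD d = Adj01.one := by
  cases n with
  | zero => exact i.elim0
  | succ m =>
    rw [finSum, List.ofFn_succ, List.foldl_cons]
    obtain ⟨c, hc, _, hiff⟩ := foldl_optStep_adj01 (List.ofFn fun i : Fin m => f i.succ) (f 0)
      (h01 0) (by
        intro x hx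
        rw [List.mem_ofFn] at hx
        obtain ⟨j, rfl⟩ := hx
        exact h01 _)
    rw [show optStep (· + ·) none (f 0) = some (f 0) from rfl, hc]
    simp only [Option.getD_some]
    apply hiff.mpr
    induction i using Fin.cases with
    | zero => exact Or.inl hi
    | succ j => exact Or.inr ⟨f j.succ, List.mem_ofFn.mpr ⟨j, rfl⟩, hi⟩

lemma finSum_adj01_eq_zero {S : Type*} [Add S] {n : ℕ} (f : Fin n → Adj01 S) (i : Fin n)
    (d : Adj01 S) (h : ∀ k, f k = Adj01.zero) : (finSum f).getD d = Adj01.zero := by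
  cases n with
  | zero => exact i.elim0
  | succ m =>
    rw [finSum, List.ofFn_succ, List.foldl_cons]
    obtain ⟨c, hc, hc01, hiff⟩ := foldl_optStep_adj01 (List.ofFn fun i : Fin m => f i.succ)
      (f 0) (Or.inl (h 0)) (by
        intro x hx
        rw [List.mem_ofFn] at hx
        obtain ⟨j, rfl⟩ := hx
        exact Or.inl (h _))
    rw [show optStep (· + ·) none (f 0) = some (f 0) from rfl, hc]
    simp only [Option.getD_some]
    rcases hc01 with h' | h'
    · exact h'
    · exfalso
      rcases hiff.mp h' with h'' | ⟨x, hx, hx1⟩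
      · rw [h 0] at h''; cases h''
      · rw [List.mem_ofFn] at hx
        obtain ⟨j, rfl⟩ := hx
        rw [h _] at hx1; cases hx1

lemma finSum_adj01_ne_one {S : Type*} [Add S] {n : ℕ} (f : Fin n → Adj01 S) (i : Fin n)
    (d : Adj01 S) (h : ∀ k, f k ≠ Adj01.one) : (finSum f).getD d ≠ Adj01.one := by
  cases n with
  | zero => exact i.elim0
  | succ m =>
    rw [finSum, List.ofFn_succ, List.foldl_cons]
    obtain ⟨c, hc, hcne⟩ := foldl_optStep_adj01_ne_one (List.ofFn fun i : Fin m => f i.succ)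
      (f 0) (h 0) (by
        intro x hx
        rw [List.mem_ofFn] at hx
        obtain ⟨j, rfl⟩ := hx
        exact h _)
    rw [show optStep (· + ·) none (f 0) = some (f 0) from rfl, hc]
    simpa using hcne

/-- Unitriangularity over `S^{01}`: the adjoined zero strictly below the diagonal, the
adjoined identity on the diagonal, and entries of `S⁰` (i.e. anything except the
adjoined identity) strictly above the diagonal. -/
def IsU {S : Type*} {n : ℕ} (A : MatSR (Adj01 S) n) : Prop :=
  (∀ i j : Fin n, (j : ℕ) < (i : ℕ) → A i j = Adj01.zero) ∧
  (∀ i : Fin n, A i i = Adj01.one) ∧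
  (∀ i j : Fin n, (i : ℕ) < (j : ℕ) → A i j ≠ Adj01.one)

lemma IsU.mul {S : Type*} [Add S] [Mul S] {n : ℕ} {A B : MatSR (Adj01 S) n}
    (hA : IsU A) (hB : IsU B) : IsU (matMul A B) := by
  refine ⟨?_, ?_, ?_⟩
  · intro i j hji
    apply finSum_adj01_eq_zero _ i
    intro k
    rcases le_or_gt (i : ℕ) (k : ℕ) with h | h
    · rw [hB.1 k j (lt_of_lt_of_le hji h), Adj01.mul_zero]
    · rw [hA.1 i k h, Adj01.zero_mul]
  · intro i
    apply finSum_adj01_eq_one _ i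
    · intro k
      rcases lt_trichotomy (k : ℕ) (i : ℕ) with h | h | h
      · rw [hA.1 i k h, Adj01.zero_mul]; exact Or.inl rfl
      · have : k = i := Fin.ext h
        subst this
        rw [hA.2.1 k, hB.2.1 k, Adj01.one_mul]; exact Or.inr rfl
      · rw [hB.1 k i h, Adj01.mul_zero]; exact Or.inl rfl
    · rw [hA.2.1 i, hB.2.1 i, Adj01.one_mul]
  · intro i j hij
    apply finSum_adj01_ne_one _ i
    intro k
    rcases lt_trichotomy (k : ℕ) (i : ℕ) with h | h | h
    · rw [hA.1 i k h, Adj01.zero_mul]; exact fun h => by cases h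
    · have : k = i := Fin.ext h
      subst this
      rw [hA.2.1 k, Adj01.one_mul]
      exact hB.2.2 k j (by omega)
    · rcases lt_trichotomy (k : ℕ) (j : ℕ) with h' | h' | h'
      · exact Adj01.mul_ne_one (hA.2.2 i k h) (hB.2.2 k j h')
      · have : k = j := Fin.ext h'
        subst this
        rw [hB.2.1 k, Adj01.mul_one]
        exact hA.2.2 i k h
      · rw [hB.1 k j h', Adj01.mul_zero]; exact fun h => by cases h

/-- The multiplicative monoid `U_n(S)` of unitriangular matrices over `S^{01}`. -/
def UMat (S : Type u) (n : ℕ) : Type u := {A : MatSR (Adj01 S) n // IsU A}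

instance {S : Type*} [Add S] [Mul S] {n : ℕ} : Mul (UMat S n) :=
  ⟨fun A B => ⟨matMul A.1 B.1, A.2.mul B.2⟩⟩

/-! ### Monogenic subsemirings. -/

/-- The carrier of the monogenic subsemiring `⟨a⟩` generated by `a` is the set of
positive powers of `a`; in a bipotent semiring it is closed under addition. -/
instance genAdd {S : Type*} [BipotentSemiring S] (a : S) : Add ↥(Set.range (mpow a)) :=
  ⟨fun p q => ⟨p.1 + q.1, by
    rcases BipotentSemiring.bipotent p.1 q.1 with h | h <;> rw [h]
    exacts [p.2, q.2]⟩⟩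

instance genMul {S : Type*} [BipotentSemiring S] (a : S) : Mul ↥(Set.range (mpow a)) :=
  ⟨fun p q => ⟨p.1 * q.1, by
    obtain ⟨m, hm⟩ := p.2
    obtain ⟨n, hn⟩ := q.2
    exact ⟨m + n + 1, by rw [← hm, ← hn, mpow_mul_mpow]⟩⟩⟩

/-! ### Concrete bipotent semirings. -/

/-- The tropical semiring `ℕ_max` of positive natural numbers: addition is `max`,
multiplication is ordinary addition. -/
def NMax : Type := {n : ℕ // 0 < n}

instance : Add NMax := ⟨fun a b => ⟨max a.1 b.1, by have := a.2; have := b.2; omega⟩⟩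
instance : Mul NMax := ⟨fun a b => ⟨a.1 + b.1, by have := a.2; have := b.2; omega⟩⟩

/-- The tropical semiring `(-ℕ)_max` of negative integers: addition is `max`,
multiplication is ordinary addition. -/
def NegNMax : Type := {z : ℤ // z < 0}

instance : Add NegNMax := ⟨fun a b => ⟨max a.1 b.1, by have := a.2; have := b.2; omega⟩⟩
instance : Mul NegNMax := ⟨fun a b => ⟨a.1 + b.1, by have := a.2; have := b.2; omega⟩⟩

/-- The truncated tropical semiring `[k]_max` on `{1,…,k}`: addition is `max`,
multiplication is `a·b = min (a+b) k`. -/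
def KMax (k : ℕ) : Type := {n : ℕ // 0 < n ∧ n ≤ k}

instance {k : ℕ} : Add (KMax k) :=
  ⟨fun a b => ⟨max a.1 b.1, by have := a.2; have := b.2; omega⟩⟩
instance {k : ℕ} : Mul (KMax k) :=
  ⟨fun a b => ⟨min (a.1 + b.1) k, by have := a.2; have := b.2; omega⟩⟩

/-- The truncated tropical semiring `[-k]_max` on `{-k,…,-1}`: addition is `max`,
multiplication is `a·b = max (a+b) (-k)`. -/
def NegKMax (k : ℕ) : Type := {z : ℤ // -(k : ℤ) ≤ z ∧ z ≤ -1}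

instance {k : ℕ} : Add (NegKMax k) :=
  ⟨fun a b => ⟨max a.1 b.1, by have := a.2; have := b.2; omega⟩⟩
instance {k : ℕ} : Mul (NegKMax k) :=
  ⟨fun a b => ⟨max (a.1 + b.1) (-(k : ℤ)), by have := a.2; have := b.2; omega⟩⟩

/-- The two-element boolean semifield `𝔹`: `{0,1}` with `0 < 1`, addition `max` (= "or")
and the usual multiplication (= "and"). -/
def BoolSR : Type := Bool

instance : Add BoolSR := ⟨fun a b => (Bool.or a b : Bool)⟩
instance : Mul BoolSR := ⟨fun a b => (Bool.and a b : Bool)⟩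

/-- A chain semiring: a linearly ordered set with addition `max` and multiplication `min`. -/
def ChainSR (L : Type u) [LinearOrder L] : Type u := L

instance {L : Type u} [LinearOrder L] : Add (ChainSR L) := ⟨fun a b => (max a b : L)⟩
instance {L : Type u} [LinearOrder L] : Mul (ChainSR L) := ⟨fun a b => (min a b : L)⟩

/-- The three-element commutative bipotent semiring of Proposition 1: order `A < B < C`
(addition is `max`), every element multiplicatively idempotent, and all products of two
distinct elements equal to `B`. -/
inductive Three : Type
  | A : Three
  | B : Three
  | C : Three
deriving DecidableEq

instance : Fintype Three where
  elems := {Three.A, Three.B, Three.C}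
  complete := fun x => by cases x <;> simp

def Three.add' : Three → Three → Three
  | .A, y => y
  | x, .A => x
  | .B, y => y
  | x, .B => x
  | .C, .C => .C

def Three.mul' : Three → Three → Three
  | .A, .A => .A
  | .B, .B => .B
  | .C, .C => .C
  | _, _ => .B

instance : Add Three := ⟨Three.add'⟩
instance : Mul Three := ⟨Three.mul'⟩

instance : CommBipotentSemiring Three where
  nonempty' := ⟨Three.A⟩
  add_assoc' := by decide
  add_comm' := by decide
  mul_assoc' := by decide
  left_distrib' := by decide
  right_distrib' := by decide
  bipotent := by decide
  mul_comm' := by decide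

/-- A bundled (possibly zero-less and identity-less) semiring, used to quantify over
semirings inside hypotheses. -/
structure BundledSemiring : Type 1 where
  carrier : Type
  add : carrier → carrier → carrier
  mul : carrier → carrier → carrier
  nonempty' : Nonempty carrier
  add_assoc' : ∀ a b c, add (add a b) c = add a (add b c)
  add_comm' : ∀ a b, add a b = add b a
  mul_assoc' : ∀ a b c, mul (mul a b) c = mul a (mul b c)
  left_distrib' : ∀ a b c, mul a (add b c) = add (mul a b) (mul a c)
  right_distrib' : ∀ a b c, mul (add a b) c = add (mul a c) (mul b c)

/-! ### Semifields. -/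

/-- `z` is a zero element: additively neutral and multiplicatively absorbing. -/
def IsZeroElem {S : Type*} [Add S] [Mul S] (z : S) : Prop :=
  ∀ x : S, z + x = x ∧ x + z = x ∧ z * x = z ∧ x * z = z

/-- `S` is a semifield: a commutative semiring, possibly without zero, whose set of
non-zero elements forms a group under multiplication (with identity `e`). -/
def IsSemifield (S : Type*) [Add S] [Mul S] : Prop :=
  ∃ e : S, ¬ IsZeroElem e ∧
    (∀ x : S, ¬ IsZeroElem x → e * x = x ∧ x * e = x) ∧
    (∀ x y : S, ¬ IsZeroElem x → ¬ IsZeroElem y → ¬ IsZeroElem (x * y)) ∧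
    (∀ x : S, ¬ IsZeroElem x → ∃ y : S, ¬ IsZeroElem y ∧ x * y = e ∧ y * x = e)

/-! ### Truncated tropical semirings. -/

/-- The underlying set `[x,y] ∪ {0}` of the truncated tropical semiring `𝕋_{[x,y]}`
(without the zero element `-∞`), for `0 ≤ x`.  Addition is `max`; multiplication is
`y`-truncated addition `a ⊗ b = min (a+b) y`, with the element `0` acting as the
multiplicative identity. -/
def TTb (x y : ℝ) (_hx : 0 ≤ x) : Type := {r : ℝ // r = 0 ∨ (x ≤ r ∧ r ≤ y)}

namespace TTb

protected def add {x y : ℝ} {hx : 0 ≤ x} (a b : TTb x y hx) : TTb x y hx :=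
  ⟨max a.1 b.1, by rcases max_choice a.1 b.1 with h | h <;> rw [h]
                   exacts [a.2, b.2]⟩

protected noncomputable def mul {x y : ℝ} {hx : 0 ≤ x} (a b : TTb x y hx) : TTb x y hx :=
  if ha : a.1 = 0 then b else if hb : b.1 = 0 then a else
    ⟨min (a.1 + b.1) y, by
      rcases a.2 with h | h
      · exact absurd h ha
      rcases b.2 with h' | h'
      · exact absurd h' hb
      right
      exact ⟨le_min (by linarith [h.1, h'.1]) (by linarith [h.1, h.2]), min_le_right _ _⟩⟩

instance {x y : ℝ} {hx : 0 ≤ x} : Add (TTb x y hx) := ⟨TTb.add⟩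
noncomputable instance {x y : ℝ} {hx : 0 ≤ x} : Mul (TTb x y hx) := ⟨TTb.mul⟩

end TTb

/-- The truncated tropical semiring `𝕋_{[x,y]}` (for `0 ≤ x < y`): the real interval
`[x,y]` together with a multiplicative identity `0` and a zero `-∞`, with addition
`max` and multiplication the `y`-truncated addition `a ⊗ b = min (a+b) y`. -/
abbrev TT (x y : ℝ) (hx : 0 ≤ x) : Type := Adj0 (TTb x y hx)

/-- The multiplicative identity `0` of `𝕋_{[x,y]}`. -/
noncomputable def ttId (x y : ℝ) (hx : 0 ≤ x) : TT x y hx := Adj0.elem ⟨0, Or.inl rfl⟩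

lemma ttId_mul {x y : ℝ} {hx : 0 ≤ x} (b : TT x y hx) : ttId x y hx * b = b := by
  cases b with
  | zero => rfl
  | elem e =>
    show Adj0.elem (TTb.mul ⟨0, Or.inl rfl⟩ e) = Adj0.elem e
    delta TTb.mul
    simp

/-- The subsemigroup `S` of `M_2(𝕋_{[1,z]})` of matrices of the form `[[0,a],[-∞,b]]`. -/
noncomputable def UpperS (z : ℝ) (hz : (0:ℝ) ≤ 1) : Type :=
  {A : MatSR (TT 1 z hz) 2 // A 0 0 = ttId 1 z hz ∧ A 1 0 = Adj0.zero}

/-- The subsemigroup `S'` of `M_2(𝕋_{[1,z]})` of matrices of the form `[[0,-∞],[a,b]]`. -/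
noncomputable def LowerS (z : ℝ) (hz : (0:ℝ) ≤ 1) : Type :=
  {A : MatSR (TT 1 z hz) 2 // A 0 0 = ttId 1 z hz ∧ A 0 1 = Adj0.zero}

noncomputable instance {z : ℝ} {hz : (0:ℝ) ≤ 1} : Mul (UpperS z hz) :=
  ⟨fun A B => ⟨A.1 * B.1, by
    obtain ⟨hA1, hA2⟩ := A.2
    obtain ⟨hB1, hB2⟩ := B.2
    constructor
    · show A.1 0 0 * B.1 0 0 + A.1 0 1 * B.1 1 0 = ttId 1 z hz
      rw [hA1, hB1, hB2, ttId_mul, Adj0.mul_zero, Adj0.add_zero]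
    · show A.1 1 0 * B.1 0 0 + A.1 1 1 * B.1 1 0 = Adj0.zero
      rw [hA2, hB2, Adj0.zero_mul, Adj0.mul_zero, Adj0.add_zero]⟩⟩

noncomputable instance {z : ℝ} {hz : (0:ℝ) ≤ 1} : Mul (LowerS z hz) :=
  ⟨fun A B => ⟨A.1 * B.1, by
    obtain ⟨hA1, hA2⟩ := A.2
    obtain ⟨hB1, hB2⟩ := B.2
    constructor
    · show A.1 0 0 * B.1 0 0 + A.1 0 1 * B.1 1 0 = ttId 1 z hz
      rw [hA1, hB1, hA2, ttId_mul, Adj0.zero_mul, Adj0.add_zero]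
    · show A.1 0 0 * B.1 0 1 + A.1 0 1 * B.1 1 1 = Adj0.zero
      rw [hA1, hB2, hA2, ttId_mul, Adj0.zero_mul, Adj0.add_zero]⟩⟩

/-! In a bipotent semiring `x ≤ y ↔ x + y = y` is a total order, and multiplying
`a ≤ a²` (resp. `a² ≤ a`) on the right by powers of `a` shows that the powers of `a` form a
chain: `aᵐ + aⁿ = a^max(m,n)` (resp. `a^min(m,n)`). So the powers can only repeat by
stabilising, `aᴺ = aᴺ⁺¹`, and `⟨a⟩` is either `{a, a², …}` with all powers distinct or
`{a, …, aᵏ}` with `aᵏ` absorbing all higher powers; reading off exponents gives the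
isomorphisms with `ℕ_max`, `(-ℕ)_max`, `[k]_max` and `[-k]_max`. -/

lemma RingLikeIso.symm {A B : Type*} [Add A] [Mul A] [Add B] [Mul B]
    (h : RingLikeIso A B) : RingLikeIso B A := by
  obtain ⟨f, hf, hadd, hmul⟩ := h
  have hinv := Function.rightInverse_surjInv hf.2
  refine ⟨Function.surjInv hf.2, ⟨hinv.injective, (Function.leftInverse_surjInv hf).surjective⟩,
    fun x y => hf.1 ?_, fun x y => hf.1 ?_⟩
  · rw [hadd, hinv, hinv, hinv]
  · rw [hmul, hinv, hinv, hinv]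

section Chain

variable {S : Type*} [BipotentSemiring S]

lemma BipotentSemiring.add_self (x : S) : x + x = x :=
  (BipotentSemiring.bipotent x x).elim id id

lemma add_eq_right_of_add_succ_eq_succ {g : ℕ → S} (hg : ∀ n, g n + g (n + 1) = g (n + 1))
    {m n : ℕ} (hmn : m ≤ n) : g m + g n = g n := by
  induction n, hmn using Nat.le_induction with
  | base => exact BipotentSemiring.add_self _
  | succ n _ ih => rw [← hg n, ← PlainSemiring.add_assoc', ih]

lemma add_eq_left_of_add_succ_eq {g : ℕ → S} (hg : ∀ n, g n + g (n + 1) = g n)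
    {m n : ℕ} (hmn : m ≤ n) : g m + g n = g m := by
  induction n, hmn using Nat.le_induction with
  | base => exact BipotentSemiring.add_self _
  | succ n _ ih => rw [← ih, PlainSemiring.add_assoc', hg n]

lemma mpow_add_mpow_succ {a : S} {j : ℕ} (h : a + a * a = mpow a j) (n : ℕ) :
    mpow a n + mpow a (n + 1) = mpow a (j + n) := by
  induction n with
  | zero => exact h
  | succ n ih =>
    show mpow a n * a + mpow a (n + 1) * a = mpow a (j + n) * a
    rw [← PlainSemiring.right_distrib', ih]

lemma mpow_add_mpow_of_le_sq {a : S} (h : a + a * a = a * a) (m n : ℕ) :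
    mpow a m + mpow a n = mpow a (max m n) := by
  have chain {m n : ℕ} (hmn : m ≤ n) := add_eq_right_of_add_succ_eq_succ
    (by simpa only [Nat.add_comm 1] using mpow_add_mpow_succ (j := 1) h) hmn
  rcases le_total m n with hmn | hnm
  · rw [max_eq_right hmn, chain hmn]
  · rw [max_eq_left hnm, PlainSemiring.add_comm', chain hnm]

lemma mpow_add_mpow_of_sq_le {a : S} (h : a * a + a = a) (m n : ℕ) :
    mpow a m + mpow a n = mpow a (min m n) := by
  have chain {m n : ℕ} (hmn : m ≤ n) := add_eq_left_of_add_succ_eq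
    (by simpa only [Nat.zero_add] using
      mpow_add_mpow_succ (j := 0) ((PlainSemiring.add_comm' _ _).trans h)) hmn
  rcases le_total m n with hmn | hnm
  · rw [min_eq_left hmn, chain hmn]
  · rw [min_eq_right hnm, PlainSemiring.add_comm', chain hnm]

lemma mpow_succ_eq_of_mpow_eq_of_add_max {a : S}
    (hmax : ∀ m n, mpow a m + mpow a n = mpow a (max m n)) {i j : ℕ} (hij : i < j)
    (h : mpow a i = mpow a j) : mpow a (i + 1) = mpow a i := by
  have hi := hmax i (i + 1)
  have hj := hmax j (i + 1)
  rw [max_eq_right (Nat.le_succ i)] at hi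
  rw [max_eq_left hij, ← h] at hj
  rw [← hi, hj]

lemma mpow_succ_eq_of_mpow_eq_of_add_min {a : S}
    (hmin : ∀ m n, mpow a m + mpow a n = mpow a (min m n)) {i j : ℕ} (hij : i < j)
    (h : mpow a i = mpow a j) : mpow a (i + 1) = mpow a i := by
  have hi := hmin i (i + 1)
  have hj := hmin j (i + 1)
  rw [min_eq_left (Nat.le_succ i)] at hi
  rw [min_eq_right hij, ← h] at hj
  rw [← hj, hi]

end Chain

section Stabilisation

variable {T : Type*} [Mul T] {a : T}

lemma mpow_min_eq_of_mpow_succ_eq {N : ℕ} (hfix : mpow a (N + 1) = mpow a N) (j : ℕ) :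
    mpow a (min j N) = mpow a j := by
  rcases le_total j N with hjN | hNj
  · rw [min_eq_left hjN]
  · rw [min_eq_right hNj]
    induction j, hNj using Nat.le_induction with
    | base => rfl
    | succ j _ ih => rw [← hfix, mpow, ih]; rfl

lemma range_mpow_eq_image_Iic {N : ℕ} (hfix : mpow a (N + 1) = mpow a N) :
    Set.range (mpow a) = mpow a '' Set.Iic N := by
  refine (Set.range_subset_iff.2 fun j => ?_).antisymm (Set.image_subset_range _ _)
  exact ⟨min j N, min_le_right j N, mpow_min_eq_of_mpow_succ_eq hfix j⟩

lemma ncard_range_mpow {N : ℕ} (hfix : mpow a (N + 1) = mpow a N)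
    (hinj : Set.InjOn (mpow a) (Set.Iic N)) : (Set.range (mpow a)).ncard = N + 1 := by
  rw [range_mpow_eq_image_Iic hfix, hinj.ncard_image, Set.ncard_Iic_nat]

lemma mpow_injective_of_infinite
    (hsq : ∀ {i j : ℕ}, i < j → mpow a i = mpow a j → mpow a (i + 1) = mpow a i)
    (hinf : (Set.range (mpow a)).Infinite) :
    Function.Injective (mpow a) := by
  have no_repeat {i j : ℕ} (hij : i < j) (h : mpow a i = mpow a j) : False := by
    apply hinf
    rw [range_mpow_eq_image_Iic (hsq hij h)]
    exact (Set.finite_Iic i).image _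
  intro i j h
  by_contra hne
  rcases Nat.lt_or_gt_of_ne hne with hij | hji
  exacts [no_repeat hij h, no_repeat hji h.symm]

lemma exists_mpow_succ_eq_injOn_Iic
    (hsq : ∀ {i j : ℕ}, i < j → mpow a i = mpow a j → mpow a (i + 1) = mpow a i)
    (hfin : (Set.range (mpow a)).Finite) :
    ∃ N, mpow a (N + 1) = mpow a N ∧ Set.InjOn (mpow a) (Set.Iic N) := by
  classical
  obtain ⟨i, j, hij, h⟩ := hfin.exists_lt_map_eq_of_forall_mem Set.mem_range_self
  have hex : ∃ N, mpow a (N + 1) = mpow a N := ⟨i, hsq hij h⟩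
  refine ⟨Nat.find hex, Nat.find_spec hex, ?_⟩
  have no_repeat {i j : ℕ} (hij : i < j) (hj : j ≤ Nat.find hex) (h : mpow a i = mpow a j) :
      False :=
    Nat.find_min hex (by omega) (hsq hij h)
  intro i hi j hj h
  by_contra hne
  rcases Nat.lt_or_gt_of_ne hne with hij | hji
  exacts [no_repeat hij hj h, no_repeat hji hi h.symm]

end Stabilisation

section Isomorphisms

variable {S : Type*} [BipotentSemiring S] {a : S}

lemma ringLikeIso_range_mpow_of_exponent {T : Type*} [Add T] [Mul T] (e : T → ℕ)
    (hinj : ∀ x y, mpow a (e x) = mpow a (e y) → x = y)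
    (hsurj : ∀ n, ∃ x, mpow a (e x) = mpow a n)
    (hadd : ∀ x y, mpow a (e (x + y)) = mpow a (e x) + mpow a (e y))
    (hmul : ∀ x y, mpow a (e (x * y)) = mpow a (e x + e y + 1)) :
    RingLikeIso (Set.range (mpow a)) T := by
  refine RingLikeIso.symm ⟨fun x => ⟨mpow a (e x), e x, rfl⟩,
    ⟨fun x y h => hinj x y (congrArg Subtype.val h), ?_⟩,
    fun x y => Subtype.ext (hadd x y),
    fun x y => Subtype.ext ((hmul x y).trans (mpow_mul_mpow a _ _).symm)⟩
  rintro ⟨_, n, rfl⟩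
  obtain ⟨x, hx⟩ := hsurj n
  exact ⟨x, Subtype.ext hx⟩

lemma ringLikeIso_nMax (hinj : Function.Injective (mpow a))
    (hmax : ∀ m n, mpow a m + mpow a n = mpow a (max m n)) :
    RingLikeIso (Set.range (mpow a)) NMax := by
  refine ringLikeIso_range_mpow_of_exponent (fun x => x.1 - 1) (fun x y h => ?_)
    (fun n => ⟨⟨n + 1, n.succ_pos⟩, rfl⟩) (fun x y => ?_) (fun x y => ?_)
  all_goals have := x.2; have := y.2
  · have := hinj h
    exact Subtype.ext (by omega)
  · rw [hmax]
    exact congrArg (mpow a) (show max x.1 y.1 - 1 = _ by omega)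
  · exact congrArg (mpow a) (show x.1 + y.1 - 1 = _ by omega)

lemma ringLikeIso_negNMax (hinj : Function.Injective (mpow a))
    (hmin : ∀ m n, mpow a m + mpow a n = mpow a (min m n)) :
    RingLikeIso (Set.range (mpow a)) NegNMax := by
  refine ringLikeIso_range_mpow_of_exponent (fun x => (-x.1).toNat - 1) (fun x y h => ?_)
    (fun n => ⟨⟨-(n + 1 : ℕ), by omega⟩,
      congrArg (mpow a) (show (-(-((n + 1 : ℕ) : ℤ))).toNat - 1 = n by omega)⟩)
    (fun x y => ?_) (fun x y => ?_)
  all_goals have := x.2; have := y.2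
  · have := hinj h
    exact Subtype.ext (by omega)
  · rw [hmin]
    exact congrArg (mpow a) (show (-max x.1 y.1).toNat - 1 = _ by omega)
  · exact congrArg (mpow a) (show (-(x.1 + y.1)).toNat - 1 = _ by omega)

lemma ringLikeIso_kMax {N : ℕ} (hfix : mpow a (N + 1) = mpow a N)
    (hinj : Set.InjOn (mpow a) (Set.Iic N))
    (hmax : ∀ m n, mpow a m + mpow a n = mpow a (max m n)) :
    RingLikeIso (Set.range (mpow a)) (KMax (N + 1)) := by
  have hstab := mpow_min_eq_of_mpow_succ_eq hfix
  refine ringLikeIso_range_mpow_of_exponent (fun x => x.1 - 1) (fun x y h => ?_)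
    (fun n => ⟨⟨min n N + 1, by omega⟩, by simp only [Nat.add_sub_cancel, hstab]⟩)
    (fun x y => ?_) (fun x y => ?_)
  all_goals have := x.2; have := y.2
  · have := hinj (Set.mem_Iic.2 (by omega)) (Set.mem_Iic.2 (by omega)) h
    exact Subtype.ext (by omega)
  · rw [hmax]
    exact congrArg (mpow a) (show max x.1 y.1 - 1 = _ by omega)
  · refine (congrArg (mpow a) ?_).trans (hstab _)
    show min (x.1 + y.1) (N + 1) - 1 = _
    omega

lemma ringLikeIso_negKMax {N : ℕ} (hfix : mpow a (N + 1) = mpow a N)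
    (hinj : Set.InjOn (mpow a) (Set.Iic N))
    (hmin : ∀ m n, mpow a m + mpow a n = mpow a (min m n)) :
    RingLikeIso (Set.range (mpow a)) (NegKMax (N + 1)) := by
  have hstab := mpow_min_eq_of_mpow_succ_eq hfix
  refine ringLikeIso_range_mpow_of_exponent (fun x => (-x.1).toNat - 1) (fun x y h => ?_)
    (fun n => ⟨⟨-(min n N + 1 : ℕ), by omega⟩, (congrArg (mpow a)
      (show (-(-((min n N + 1 : ℕ) : ℤ))).toNat - 1 = min n N by omega)).trans (hstab n)⟩)
    (fun x y => ?_) (fun x y => ?_)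
  all_goals have := x.2; have := y.2
  · have := hinj (Set.mem_Iic.2 (by omega)) (Set.mem_Iic.2 (by omega)) h
    exact Subtype.ext (by omega)
  · rw [hmin]
    exact congrArg (mpow a) (show (-max x.1 y.1).toNat - 1 = _ by omega)
  · refine (congrArg (mpow a) ?_).trans (hstab _)
    show (-max (x.1 + y.1) (-((N + 1 : ℕ) : ℤ))).toNat - 1 = _
    omega

end Isomorphisms

/-- classification of the monogenic subsemiring `⟨a⟩` (the set of positive
powers of `a`, here `Set.range (mpow a)`) of a bipotent semiring.  The order on `S` is
given by `u ≤ v ↔ u + v = v`, so `a < a²` is expressed as `a + a*a = a*a ∧ a ≠ a*a`,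
and the multiplicative order of `a` is the cardinality of `Set.range (mpow a)`. -/
theorem stmt_2 {S : Type*} [BipotentSemiring S] (a : S) :
    ((Set.range (mpow a)).Infinite → a + a * a = a * a → a ≠ a * a →
      RingLikeIso (↥(Set.range (mpow a))) NMax) ∧
    ((Set.range (mpow a)).Infinite → a * a + a = a → a ≠ a * a →
      RingLikeIso (↥(Set.range (mpow a))) NegNMax) ∧
    (∀ k : ℕ, (Set.range (mpow a)).Finite → (Set.range (mpow a)).ncard = k →
      a + a * a = a * a → RingLikeIso (↥(Set.range (mpow a))) (KMax k)) ∧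
    (∀ k : ℕ, (Set.range (mpow a)).Finite → (Set.range (mpow a)).ncard = k →
      a * a + a = a → RingLikeIso (↥(Set.range (mpow a))) (NegKMax k)) := by
  refine ⟨fun hinf hle _ => ?_, fun hinf hle _ => ?_, fun k hfin hk hle => ?_,
    fun k hfin hk hle => ?_⟩
  · have hmax := mpow_add_mpow_of_le_sq hle
    exact ringLikeIso_nMax
      (mpow_injective_of_infinite (mpow_succ_eq_of_mpow_eq_of_add_max hmax) hinf) hmax
  · have hmin := mpow_add_mpow_of_sq_le hle
    exact ringLikeIso_negNMax
      (mpow_injective_of_infinite (mpow_succ_eq_of_mpow_eq_of_add_min hmin) hinf) hmin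
  · have hmax := mpow_add_mpow_of_le_sq hle
    obtain ⟨N, hfix, hinj⟩ :=
      exists_mpow_succ_eq_injOn_Iic (mpow_succ_eq_of_mpow_eq_of_add_max hmax) hfin
    rw [← hk, ncard_range_mpow hfix hinj]
    exact ringLikeIso_kMax hfix hinj hmax
  · have hmin := mpow_add_mpow_of_sq_le hle
    obtain ⟨N, hfix, hinj⟩ :=
      exists_mpow_succ_eq_injOn_Iic (mpow_succ_eq_of_mpow_eq_of_add_min hmin) hfin
    rw [← hk, ncard_range_mpow hfix hinj]
    exact ringLikeIso_negKMax hfix hinj hmin
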